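/- Let ⟨G, h, g⟩ be a losing hat guessing game (directed), u, v vertices with u→v not an edge. Then the game on G with edge u→v added, hatness h unchanged, and guessing function g' with g'(x)=g(x) for x ≠ u and g'(u) = ⌊g(u)/h(v)⌋, is losing. -/
import Mathlib


/-- Winning strategy for the hat game on a directed visibility graph: `E u v` means `u` sees `v`. -/
def DHatWinning {V : Type*} (E : V → V → Prop) (h g : V → ℕ) : Prop :=
  ∃ σ : V → (V → ℕ) → Finset ℕ,
    (∀ v c c', (∀ u, E v u → c u = c' u) → σ v c = σ v c') ∧
    (∀ v c, (σ v c).card ≤ g v) ∧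
    ∀ c : V → ℕ, (∀ v, c v < h v) → ∃ v, c v ∈ σ v c

/-- The directed hat game on the induced subgraph with vertex set `S`. -/
def DHatWinningOn {V : Type*} (E : V → V → Prop) (S : Set V) (h g : V → ℕ) : Prop :=
  ∃ σ : V → (V → ℕ) → Finset ℕ,
    (∀ v ∈ S, ∀ c c', (∀ u ∈ S, E v u → c u = c' u) → σ v c = σ v c') ∧
    (∀ v ∈ S, ∀ c, (σ v c).card ≤ g v) ∧
    ∀ c : V → ℕ, (∀ v ∈ S, c v < h v) → ∃ v ∈ S, c v ∈ σ v c

/-- Adding a directed edge `u → v` to a losing game keeps it losing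
if `u`'s number of guesses is divided by `h v` (floor division). -/
theorem half_edge_adding_losing {V : Type*} [DecidableEq V] (E : V → V → Prop) (h g : V → ℕ)
    (u v : V) (huv : ¬ E u v) (hlose : ¬ DHatWinning E h g) :
    ¬ DHatWinning (fun x y => E x y ∨ (x = u ∧ y = v)) h
      (fun x => if x = u then g u / h v else g x) := by
  rintro ⟨σ, hcons, hcard, hwin⟩
  apply hlose
  by_cases hv : h v = 0
  · exact ⟨fun _ _ => ∅, fun _ _ _ _ => rfl, fun x c => Nat.zero_le _,
      fun c hc => absurd (hc v) (by omega)⟩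
  · refine ⟨fun x c => if x = u then
        (Finset.range (h v)).biUnion (fun b => σ u (Function.update c v b))
      else σ x c, ?_, ?_, ?_⟩
    · intro x c c' hcc
      by_cases hx : x = u
      · simp only [if_pos hx]
        apply Finset.biUnion_congr rfl
        intro b _
        apply hcons
        intro y hy
        by_cases hyv : y = v
        · subst hyv; simp
        · rcases hy with hy | ⟨_, hy⟩
          · rw [hx] at hcc
            simp [Function.update_of_ne hyv, hcc y hy]
          · exact absurd hy hyv
      · simp only [if_neg hx]
        apply hcons x c c'
        intro y hy
        rcases hy with hy | ⟨hxu, _⟩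
        · exact hcc y hy
        · exact absurd hxu hx
    · intro x c
      by_cases hx : x = u
      · simp only [if_pos hx]
        rw [hx]
        calc ((Finset.range (h v)).biUnion fun b => σ u (Function.update c v b)).card
            ≤ ∑ b ∈ Finset.range (h v), (σ u (Function.update c v b)).card :=
              Finset.card_biUnion_le
          _ ≤ ∑ _b ∈ Finset.range (h v), (g u / h v) := by
              apply Finset.sum_le_sum
              intro b _
              have := hcard u (Function.update c v b)
              simpa using this
          _ = h v * (g u / h v) := by simp [Finset.sum_const, Nat.smul_one_eq_cast]
          _ ≤ g u := Nat.mul_div_le (g u) (h v)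
      · simpa [if_neg hx] using hcard x c
    · intro c hc
      obtain ⟨x, hx⟩ := hwin c hc
      refine ⟨x, ?_⟩
      by_cases hxu : x = u
      · simp only [if_pos hxu, Finset.mem_biUnion]
        rw [hxu] at hx
        exact ⟨c v, Finset.mem_range.mpr (hc v), by rw [Function.update_eq_self, hxu]; exact hx⟩
      · simpa [if_neg hxu] using hx
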